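/- arXiv:math/0402391 — 2 statements merged into one kernel-verified Lean document; each statement's English description precedes it below -/
import Mathlib

section
/- Let A and C be symmetric operators on a Hilbert space and D a linear subspace contained in both D(A) and D(C). If there exist constants 0 ≤ a < 1 and b ≥ 0 such that ‖(A−C)φ‖ ≤ a(‖Aφ‖ + ‖Cφ‖) + b‖φ‖ for all φ ∈ D, then A is essentially self-adjoint on D if and only if C is essentially self-adjoint on D, and in that case the closures of A restricted to D and C restricted to D have equal domains. -/
/-!
Let `S` and `T` be the restrictions of `A` and `C` to `D`, and suppose `S̄` is self-adjoint.
Since `a < 1`, the hypothesis gives `‖Tφ‖ ≤ K (‖Sφ‖ + ‖φ‖)` and vice versa, so `S` and `T` have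
equivalent graph norms: `S̄` and `T̄` have the same domain and still satisfy the bound. Write
`T̄ = S̄ + V` on that domain. Splitting `S̄φ` and `T̄φ` around `(S̄ + tV)φ` turns the bound into
`‖Vφ‖ ≤ 2a/(1-a) ‖(S̄ + tV)φ‖ + b/(1-a) ‖φ‖`, uniformly in `t ∈ [0, 1]`, so the segment from
`S̄` to `T̄` splits into `n > 2a/(1-a)` Kato–Rellich steps of relative bound `< 1`. Each step
preserves self-adjointness: if `R` is self-adjoint then `R ± i s` is onto with
`‖(R ± i s) φ‖ ≥ max (‖Rφ‖, |s| ‖φ‖)`, so for `|s|` large `V (R ± i s)⁻¹` is a contraction and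
`R + V ± i s` is onto, which forces the symmetric operator `R + V` to be self-adjoint.
-/

open scoped InnerProductSpace

variable {H : Type*} [NormedAddCommGroup H] [InnerProductSpace ℂ H] [CompleteSpace H]

def LinearPMap.IsSymmetricOp (A : H →ₗ.[ℂ] H) : Prop :=
  ∀ x y : A.domain, ⟪A x, (y : H)⟫_ℂ = ⟪(x : H), A y⟫_ℂ

noncomputable def EssentiallySelfAdjointOn (A : H →ₗ.[ℂ] H) (D : Submodule ℂ H) : Prop :=
  IsSelfAdjoint ((A.domRestrict D).closure)

open Filter Topology Complex
open scoped LinearPMap ComplexConjugate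

lemma CauchySeq.of_dist_le_mul {α β : Type*} [PseudoMetricSpace α] [PseudoMetricSpace β]
    {u : ℕ → α} {v : ℕ → β} (hu : CauchySeq u) (C : ℝ)
    (h : ∀ m n, dist (v m) (v n) ≤ C * dist (u m) (u n)) : CauchySeq v := by
  rw [cauchySeq_iff_tendsto_dist_atTop_0] at hu ⊢
  exact squeeze_zero (fun _ => dist_nonneg) (fun p => h p.1 p.2) (by simpa using hu.const_mul C)

lemma LinearMap.surjective_add_of_norm_le_mul {R M E : Type*} [Semiring R] [AddCommGroup M]
    [Module R M] [NormedAddCommGroup E] [CompleteSpace E] [Module R E] {L V : M →ₗ[R] E}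
    (hL : Function.Surjective L) {γ : ℝ} (hγ : γ < 1) (hV : ∀ x, ‖V x‖ ≤ γ * ‖L x‖) :
    Function.Surjective (L + V) := by
  intro y
  choose inv hinv using hL
  -- a fixed point `z` of `z ↦ y - V (inv z)` makes `inv z` a preimage of `y`
  have hcontr : ContractingWith (Real.toNNReal γ) fun z => y - V (inv z) := by
    refine ⟨Real.toNNReal_lt_one.2 hγ, LipschitzWith.of_dist_le_mul fun z₁ z₂ => ?_⟩
    calc dist (y - V (inv z₁)) (y - V (inv z₂)) = ‖V (inv z₂ - inv z₁)‖ := by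
          rw [dist_eq_norm, sub_sub_sub_cancel_left, map_sub]
      _ ≤ γ * ‖L (inv z₂ - inv z₁)‖ := hV _
      _ = γ * dist z₁ z₂ := by rw [map_sub, hinv, hinv, dist_eq_norm, norm_sub_rev]
      _ ≤ Real.toNNReal γ * dist z₁ z₂ :=
          mul_le_mul_of_nonneg_right (Real.le_coe_toNNReal γ) dist_nonneg
  have hz := hcontr.fixedPoint_isFixedPt (f := fun z => y - V (inv z))
  exact ⟨inv _, by rw [LinearMap.add_apply, hinv, ← eq_sub_iff_add_eq]; exact hz.symm⟩

lemma norm_le_mul_norm_prod_of_norm_sub_le {E F : Type*} [SeminormedAddCommGroup E]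
    [SeminormedAddCommGroup F] {a b : ℝ} {x : E} {u v : F} (ha0 : 0 ≤ a) (ha1 : a < 1)
    (hb : 0 ≤ b) (h : ‖u - v‖ ≤ a * (‖u‖ + ‖v‖) + b * ‖x‖) :
    ‖v‖ ≤ (1 + a + b) / (1 - a) * ‖(x, u)‖ := by
  have hv : ‖v‖ ≤ ‖u‖ + ‖u - v‖ := by
    linarith [norm_sub_norm_le v u, norm_sub_rev u v]
  have hx := norm_fst_le (x, u)
  have hu := norm_snd_le (x, u)
  rw [div_mul_eq_mul_div, le_div_iff₀ (by linarith)]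
  nlinarith [mul_le_mul_of_nonneg_left hu ha0, mul_le_mul_of_nonneg_left hx hb]

lemma norm_le_of_le_mul_norm_add_norm {E : Type*} [SeminormedAddCommGroup E] [NormedSpace ℝ E]
    {a c t : ℝ} {u w : E} (ha0 : 0 ≤ a) (ha1 : a < 1) (ht : t ∈ Set.Icc (0 : ℝ) 1)
    (h : ‖w‖ ≤ a * (‖u‖ + ‖u + w‖) + c) :
    ‖w‖ ≤ 2 * a / (1 - a) * ‖u + t • w‖ + c / (1 - a) := by
  obtain ⟨ht0, ht1⟩ := ht
  have hu : ‖u‖ ≤ ‖u + t • w‖ + t * ‖w‖ := by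
    calc ‖u‖ = ‖(u + t • w) - t • w‖ := by rw [add_sub_cancel_right]
      _ ≤ ‖u + t • w‖ + ‖t • w‖ := norm_sub_le _ _
      _ = ‖u + t • w‖ + t * ‖w‖ := by rw [norm_smul, Real.norm_of_nonneg ht0]
  have huw : ‖u + w‖ ≤ ‖u + t • w‖ + (1 - t) * ‖w‖ := by
    calc ‖u + w‖ = ‖(u + t • w) + (1 - t) • w‖ := by congr 1; module
      _ ≤ ‖u + t • w‖ + ‖(1 - t) • w‖ := norm_add_le _ _
      _ = ‖u + t • w‖ + (1 - t) * ‖w‖ := by rw [norm_smul, Real.norm_of_nonneg (by linarith)]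
  rw [div_mul_eq_mul_div, ← add_div, le_div_iff₀ (by linarith)]
  nlinarith [mul_le_mul_of_nonneg_left hu ha0, mul_le_mul_of_nonneg_left huw ha0]

namespace LinearPMap

section Algebra

variable {R E F : Type*} [Ring R] [AddCommGroup E] [AddCommGroup F] [Module R E] [Module R F]

lemma mem_graph_domRestrict_iff {f : E →ₗ.[R] F} {D : Submodule R E} {x : E} {y : F} :
    (x, y) ∈ (f.domRestrict D).graph ↔ x ∈ D ∧ (x, y) ∈ f.graph := by
  simp only [mem_graph_iff, Subtype.exists]
  constructor
  · rintro ⟨x, ⟨hxD, hxf⟩, rfl, rfl⟩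
    exact ⟨hxD, x, hxf, rfl, (domRestrict_apply rfl).symm⟩
  · rintro ⟨hxD, x, hxf, rfl, rfl⟩
    exact ⟨x, ⟨hxD, hxf⟩, rfl, domRestrict_apply rfl⟩

def perturb (A : E →ₗ.[R] F) (V : A.domain →ₗ[R] F) : E →ₗ.[R] F :=
  ⟨A.domain, A.toFun + V⟩

variable {A : E →ₗ.[R] F}

@[simp]
lemma perturb_apply (V : A.domain →ₗ[R] F) (x : (A.perturb V).domain) :
    A.perturb V x = A x + V x :=
  rfl

@[simp]
lemma perturb_zero : A.perturb 0 = A := by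
  change mk A.domain (A.toFun + 0) = A
  rw [add_zero]

lemma perturb_perturb (V W : A.domain →ₗ[R] F) :
    (A.perturb V).perturb W = A.perturb (V + W) :=
  ext' (add_assoc _ _ _)

end Algebra

section Topology

variable {R E F : Type*} [CommRing R] [AddCommGroup E] [AddCommGroup F] [Module R E]
  [Module R F] [TopologicalSpace E] [TopologicalSpace F] [ContinuousAdd E] [ContinuousAdd F]
  [TopologicalSpace R] [ContinuousSMul R E] [ContinuousSMul R F]

lemma IsClosable.mem_closure_graph_iff {f : E →ₗ.[R] F} (hf : f.IsClosable) {p : E × F} :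
    p ∈ f.closure.graph ↔ p ∈ _root_.closure (f.graph : Set (E × F)) := by
  rw [← hf.graph_closure_eq_closure_graph]
  rfl

lemma IsClosable.graph_closure_subset {f : E →ₗ.[R] F} (hf : f.IsClosable) {s : Set (E × F)}
    (hs : _root_.IsClosed s) (h : (f.graph : Set (E × F)) ⊆ s) :
    (f.closure.graph : Set (E × F)) ⊆ s :=
  fun _ hp => closure_minimal h hs (hf.mem_closure_graph_iff.1 hp)

lemma closure_domain_subset_closure (f : E →ₗ.[R] F) :
    (f.closure.domain : Set E) ⊆ _root_.closure (f.domain : Set E) := by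
  by_cases hf : f.IsClosable
  · exact fun x hx => hf.graph_closure_subset (isClosed_closure.preimage continuous_fst)
      (fun p hp => subset_closure (mem_domain_of_mem_graph hp)) (f.closure.mem_graph ⟨x, hx⟩)
  · rw [closure_def' hf]
    exact subset_closure

end Topology

section Normed

variable {𝕜 E F : Type*} [NormedField 𝕜] [NormedAddCommGroup E] [NormedSpace 𝕜 E]
  [NormedAddCommGroup F] [NormedSpace 𝕜 F] [CompleteSpace F]

lemma IsClosable.exists_mem_closure_graph_of_norm_le {P Q : E →ₗ.[𝕜] F} (hP : P.IsClosable)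
    (hQ : Q.IsClosable) (hdom : P.domain ≤ Q.domain) {K : ℝ}
    (hK : ∀ {x u v}, (x, u) ∈ P.graph → (x, v) ∈ Q.graph → ‖v‖ ≤ K * ‖(x, u)‖)
    {s : Set ((E × F) × F)} (hs : _root_.IsClosed s)
    (hPQs : ∀ {x u v}, (x, u) ∈ P.graph → (x, v) ∈ Q.graph → ((x, u), v) ∈ s)
    {x : E} {u : F} (hxu : (x, u) ∈ P.closure.graph) :
    ∃ v, (x, v) ∈ Q.closure.graph ∧ ((x, u), v) ∈ s := by
  obtain ⟨p, hp, hpt⟩ := mem_closure_iff_seq_limit.1 (hP.mem_closure_graph_iff.1 hxu)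
  have hpQ : ∀ n, (p n).1 ∈ Q.domain := fun n => hdom (mem_domain_of_mem_graph (hp n))
  set q : ℕ → F := fun n => Q ⟨(p n).1, hpQ n⟩
  have hq : ∀ n, ((p n).1, q n) ∈ Q.graph := fun n => Q.mem_graph ⟨_, hpQ n⟩
  have hcauchy : CauchySeq q := hpt.cauchySeq.of_dist_le_mul K fun m n => by
    rw [dist_eq_norm, dist_eq_norm]
    exact hK (sub_mem (hp m) (hp n)) (sub_mem (hq m) (hq n))
  obtain ⟨v, hv⟩ := cauchySeq_tendsto_of_complete hcauchy
  refine ⟨v, hQ.mem_closure_graph_iff.2 ?_, ?_⟩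
  · exact mem_closure_of_tendsto (hpt.fst_nhds.prodMk_nhds hv) (Eventually.of_forall hq)
  · exact hs.mem_of_tendsto (hpt.prodMk_nhds hv) (Eventually.of_forall fun n => hPQs (hp n) (hq n))

lemma IsClosable.closure_norm_sub_le {S T : E →ₗ.[𝕜] F} (hS : S.IsClosable) (hT : T.IsClosable)
    (hdom : S.domain = T.domain) {a b : ℝ} (ha0 : 0 ≤ a) (ha1 : a < 1) (hb : 0 ≤ b)
    (hbound : ∀ {x u v}, (x, u) ∈ S.graph → (x, v) ∈ T.graph →
      ‖u - v‖ ≤ a * (‖u‖ + ‖v‖) + b * ‖x‖) :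
    S.closure.domain = T.closure.domain ∧ ∀ {x u v}, (x, u) ∈ S.closure.graph →
      (x, v) ∈ T.closure.graph → ‖u - v‖ ≤ a * (‖u‖ + ‖v‖) + b * ‖x‖ := by
  have hbound' : ∀ {x u v}, (x, u) ∈ T.graph → (x, v) ∈ S.graph →
      ‖u - v‖ ≤ a * (‖u‖ + ‖v‖) + b * ‖x‖ := fun {_ u v} hu hv => by
    rw [norm_sub_rev, add_comm ‖u‖]
    exact hbound hv hu
  have hclosed : _root_.IsClosed {p : (E × F) × F |
      ‖p.1.2 - p.2‖ ≤ a * (‖p.1.2‖ + ‖p.2‖) + b * ‖p.1.1‖} :=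
    isClosed_le (by fun_prop) (by fun_prop)
  have hST := fun {x u} (hxu : (x, u) ∈ S.closure.graph) =>
    hS.exists_mem_closure_graph_of_norm_le hT hdom.le
      (fun hu hv => norm_le_mul_norm_prod_of_norm_sub_le ha0 ha1 hb (hbound hu hv)) hclosed
      (fun hu hv => hbound hu hv) hxu
  have hTS := fun {x u} (hxu : (x, u) ∈ T.closure.graph) =>
    hT.exists_mem_closure_graph_of_norm_le hS hdom.ge
      (fun hu hv => norm_le_mul_norm_prod_of_norm_sub_le ha0 ha1 hb (hbound' hu hv))
      isClosed_univ (fun _ _ => trivial) hxu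
  refine ⟨le_antisymm (fun x hx => ?_) (fun x hx => ?_), fun {x u v} hu hv => ?_⟩
  · obtain ⟨v, hv, -⟩ := hST (S.closure.mem_graph ⟨x, hx⟩)
    exact mem_domain_of_mem_graph hv
  · obtain ⟨v, hv, -⟩ := hTS (T.closure.mem_graph ⟨x, hx⟩)
    exact mem_domain_of_mem_graph hv
  · obtain ⟨v', hv', hbd⟩ := hST hu
    rwa [T.closure.mem_graph_snd_inj hv hv' rfl]

end Normed

section Symmetric

variable {E : Type*} [NormedAddCommGroup E] [InnerProductSpace ℂ E] {A B : E →ₗ.[ℂ] E}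

lemma isSymmetricOp_iff_graph : A.IsSymmetricOp ↔
    ∀ p ∈ A.graph, ∀ q ∈ A.graph, ⟪p.2, q.1⟫_ℂ = ⟪p.1, q.2⟫_ℂ := by
  refine ⟨fun hA ⟨_, _⟩ hp ⟨_, _⟩ hq => ?_, fun h x y => h _ (A.mem_graph x) _ (A.mem_graph y)⟩
  obtain ⟨x, rfl, rfl⟩ := (mem_graph_iff A).1 hp
  obtain ⟨y, rfl, rfl⟩ := (mem_graph_iff A).1 hq
  exact hA x y

lemma IsSymmetricOp.mono (hA : A.IsSymmetricOp) (hBA : B ≤ A) : B.IsSymmetricOp :=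
  isSymmetricOp_iff_graph.2 fun p hp q hq =>
    isSymmetricOp_iff_graph.1 hA p (le_graph_of_le hBA hp) q (le_graph_of_le hBA hq)

lemma IsSymmetricOp.closure (hA : A.IsSymmetricOp) (hcl : A.IsClosable) :
    A.closure.IsSymmetricOp := by
  have hclosed : ∀ q : E × E, _root_.IsClosed {p : E × E | ⟪p.2, q.1⟫_ℂ = ⟪p.1, q.2⟫_ℂ} :=
    fun q => isClosed_eq (by fun_prop) (by fun_prop)
  have hclosed' : ∀ p : E × E, _root_.IsClosed {q : E × E | ⟪p.2, q.1⟫_ℂ = ⟪p.1, q.2⟫_ℂ} :=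
    fun p => isClosed_eq (by fun_prop) (by fun_prop)
  have hleft : ∀ p ∈ A.closure.graph, ∀ q ∈ A.graph, ⟪p.2, q.1⟫_ℂ = ⟪p.1, q.2⟫_ℂ :=
    fun p hp q hq => hcl.graph_closure_subset (hclosed q)
      (fun p' hp' => isSymmetricOp_iff_graph.1 hA p' hp' q hq) hp
  exact isSymmetricOp_iff_graph.2 fun p hp q hq =>
    hcl.graph_closure_subset (hclosed' p) (hleft p hp) hq

lemma IsSymmetricOp.smul_ofReal (hA : A.IsSymmetricOp) (c : ℝ) : ((c : ℂ) • A).IsSymmetricOp :=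
  fun x y => by
    simp only [smul_apply, inner_smul_left, inner_smul_right, conj_ofReal]
    rw [hA x y]

lemma IsSymmetricOp.perturb (hA : A.IsSymmetricOp) {V : A.domain →ₗ[ℂ] E}
    (hV : (mk A.domain V).IsSymmetricOp) : (A.perturb V).IsSymmetricOp := fun x y => by
  rw [perturb_apply, perturb_apply, inner_add_left, inner_add_right, hA x y]
  exact congrArg _ (hV x y)

def addScalar (A : E →ₗ.[ℂ] E) (μ : ℂ) : A.domain →ₗ[ℂ] E :=
  A.toFun + μ • A.domain.subtype

@[simp]
lemma addScalar_apply (μ : ℂ) (x : A.domain) : A.addScalar μ x = A x + μ • (x : E) :=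
  rfl

lemma IsSymmetricOp.norm_addScalar_sq (hA : A.IsSymmetricOp) (s : ℝ) (x : A.domain) :
    ‖A.addScalar (s * I) x‖ ^ 2 = ‖A x‖ ^ 2 + s ^ 2 * ‖(x : E)‖ ^ 2 := by
  have hreal : (⟪A x, (x : E)⟫_ℂ).im = 0 :=
    Complex.conj_eq_iff_im.1 (by rw [inner_conj_symm]; exact (hA x x).symm)
  rw [addScalar_apply, @norm_add_sq ℂ, inner_smul_right, norm_smul]
  simp [hreal, mul_pow]

lemma IsSymmetricOp.norm_le_norm_addScalar (hA : A.IsSymmetricOp) (s : ℝ) (x : A.domain) :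
    ‖A x‖ ≤ ‖A.addScalar (s * I) x‖ := by
  refine (pow_le_pow_iff_left₀ (norm_nonneg _) (norm_nonneg _) two_ne_zero).1 ?_
  rw [hA.norm_addScalar_sq]
  exact le_add_of_nonneg_right (by positivity)

lemma IsSymmetricOp.abs_mul_norm_le_norm_addScalar (hA : A.IsSymmetricOp) (s : ℝ)
    (x : A.domain) : |s| * ‖(x : E)‖ ≤ ‖A.addScalar (s * I) x‖ := by
  refine (pow_le_pow_iff_left₀ (by positivity) (norm_nonneg _) two_ne_zero).1 ?_
  rw [hA.norm_addScalar_sq, mul_pow, sq_abs]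
  exact le_add_of_nonneg_left (by positivity)

end Symmetric

variable {A : H →ₗ.[ℂ] H}

lemma IsSymmetricOp.isClosable (hA : A.IsSymmetricOp) (hd : Dense (A.domain : Set H)) :
    A.IsClosable :=
  (adjoint_isClosed hd).isClosable.leIsClosable (IsFormalAdjoint.le_adjoint hd hA)

lemma inner_eq_of_mem_adjoint_graph (hd : Dense (A.domain : Set H)) {u w : H}
    (h : (u, w) ∈ A†.graph) (y : A.domain) : ⟪w, (y : H)⟫_ℂ = ⟪u, A y⟫_ℂ := by
  obtain ⟨u, rfl, rfl⟩ := (mem_graph_iff _).1 h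
  exact adjoint_isFormalAdjoint hd u y

lemma _root_.IsSelfAdjoint.isSymmetricOp (hA : IsSelfAdjoint A) : A.IsSymmetricOp := by
  have h := adjoint_isFormalAdjoint hA.dense_domain (T := A)
  rw [isSelfAdjoint_def.1 hA] at h
  exact h

lemma _root_.IsSelfAdjoint.mem_graph_of_inner (hA : IsSelfAdjoint A) {u w : H}
    (h : ∀ x : A.domain, ⟪w, (x : H)⟫_ℂ = ⟪u, A x⟫_ℂ) : (u, w) ∈ A.graph := by
  have hu : u ∈ A†.domain := mem_adjoint_domain_of_exists u ⟨w, h⟩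
  have hmem : (u, w) ∈ A†.graph :=
    (mem_graph_iff _).2 ⟨⟨u, hu⟩, rfl, adjoint_apply_eq hA.dense_domain ⟨u, hu⟩ h⟩
  rwa [isSelfAdjoint_def.1 hA] at hmem

lemma IsClosed.isClosed_range_addScalar (hA : A.IsClosed) (μ : ℂ) {c : ℝ} (hc : 0 < c)
    (h : ∀ x : A.domain, c * ‖(x : H)‖ ≤ ‖A.addScalar μ x‖) :
    _root_.IsClosed (LinearMap.range (A.addScalar μ) : Set H) := by
  refine IsSeqClosed.isClosed fun y z hy hyz => ?_
  choose x hx using fun n => LinearMap.mem_range.1 (hy n)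
  have hcauchy : CauchySeq fun n => (x n : H) :=
    hyz.cauchySeq.of_dist_le_mul c⁻¹ fun m n => by
      rw [dist_eq_norm, dist_eq_norm, ← hx m, ← hx n, ← LinearMap.map_sub, le_inv_mul_iff₀ hc,
        ← Submodule.coe_sub]
      exact h (x m - x n)
  obtain ⟨x₀, hx₀⟩ := cauchySeq_tendsto_of_complete hcauchy
  have hAx : Tendsto (fun n => A (x n)) atTop (𝓝 (z - μ • x₀)) :=
    (hyz.sub (hx₀.const_smul μ)).congr fun n => by
      rw [← hx n, addScalar_apply, add_sub_cancel_right]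
  have hgraph : (x₀, z - μ • x₀) ∈ A.graph :=
    hA.mem_of_tendsto (hx₀.prodMk_nhds hAx) (Eventually.of_forall fun n => A.mem_graph (x n))
  obtain ⟨x', rfl, hx'⟩ := (mem_graph_iff A).1 hgraph
  exact ⟨x', by rw [addScalar_apply, hx', sub_add_cancel]⟩

lemma _root_.IsSelfAdjoint.surjective_addScalar (hA : IsSelfAdjoint A) {s : ℝ} (hs : s ≠ 0) :
    Function.Surjective (A.addScalar (s * I)) := by
  have hsymm := hA.isSymmetricOp
  set K := LinearMap.range (A.addScalar (s * I))
  have hK : _root_.IsClosed (K : Set H) := hA.isClosed.isClosed_range_addScalar _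
    (abs_pos.2 hs) (hsymm.abs_mul_norm_le_norm_addScalar s)
  have hKperp : Kᗮ = ⊥ := by
    refine (Submodule.eq_bot_iff _).2 fun u hu => ?_
    -- `u ⊥ ran (A + s I)` makes `u` an eigenvector of `A` for the non-real eigenvalue `s I`
    have hgraph : (u, (s * I : ℂ) • u) ∈ A.graph := hA.mem_graph_of_inner fun x => by
      have hux := (Submodule.mem_orthogonal' K u).1 hu _ (LinearMap.mem_range_self _ x)
      rw [addScalar_apply, inner_add_right, inner_smul_right] at hux
      rw [inner_smul_left, map_mul, conj_ofReal, conj_I]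
      linear_combination -hux
    obtain ⟨u, rfl, hAu⟩ := (mem_graph_iff A).1 hgraph
    have hker : A.addScalar ((-s : ℝ) * I) u = 0 := by
      rw [addScalar_apply, hAu, ← add_smul]
      push_cast
      simp
    have hbound := hsymm.abs_mul_norm_le_norm_addScalar (-s) u
    rw [hker, norm_zero, abs_neg] at hbound
    exact norm_le_zero_iff.1 (by nlinarith [abs_pos.2 hs, norm_nonneg (u : H)])
  have : CompleteSpace K := hK.completeSpace_coe
  exact LinearMap.range_eq_top.1 (Submodule.orthogonal_eq_bot_iff.1 hKperp)

lemma IsSymmetricOp.isSelfAdjoint_of_surjective (hA : A.IsSymmetricOp)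
    (hd : Dense (A.domain : Set H)) {μ : ℂ} (hμ : conj μ = -μ)
    (hplus : Function.Surjective (A.addScalar μ))
    (hminus : Function.Surjective (A.addScalar (-μ))) :
    IsSelfAdjoint A := by
  have hle : A ≤ A† := IsFormalAdjoint.le_adjoint hd hA
  have hdom : A†.domain ≤ A.domain := by
    intro ψ hψ
    obtain ⟨x, hx⟩ := hplus (A† ⟨ψ, hψ⟩ + μ • ψ)
    rw [addScalar_apply] at hx
    have hu : (ψ - x, -μ • (ψ - x)) ∈ A†.graph := by
      have h := sub_mem (A†.mem_graph ⟨ψ, hψ⟩) (le_graph_of_le hle (A.mem_graph x))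
      rw [Prod.mk_sub_mk, eq_sub_of_add_eq hx] at h
      convert h using 2
      module
    obtain ⟨y, hy⟩ := hminus (ψ - x)
    have horth : ⟪ψ - x, A.addScalar (-μ) y⟫_ℂ = 0 := by
      rw [addScalar_apply, inner_add_right, inner_smul_right,
        ← inner_eq_of_mem_adjoint_graph hd hu, inner_smul_left]
      simp [hμ]
    rw [hy, inner_self_eq_zero] at horth
    rw [← sub_add_cancel ψ x, horth, zero_add]
    exact x.2
  exact isSelfAdjoint_def.2 (eq_of_le_of_domain_eq hle (le_antisymm hle.1 hdom)).symm

lemma _root_.IsSelfAdjoint.perturb (hA : IsSelfAdjoint A) {V : A.domain →ₗ[ℂ] H}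
    (hV : (mk A.domain V).IsSymmetricOp) {α β : ℝ} (hα0 : 0 ≤ α) (hα : α < 1) (hβ : 0 ≤ β)
    (hbound : ∀ x, ‖V x‖ ≤ α * ‖A x‖ + β * ‖(x : H)‖) : IsSelfAdjoint (A.perturb V) := by
  have hsymm := hA.isSymmetricOp
  -- for `|s| = t`, `V` is `(A + s I)`-bounded with bound `α + β / t < 1`
  set t := β / (1 - α) + 1
  have ht : 0 < t := by positivity
  have hγ : α + β / t < 1 := by
    have : β / t < 1 - α := by
      rw [div_lt_iff₀ ht, mul_add, mul_div_cancel₀ _ (by linarith), mul_one]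
      linarith
    linarith
  have hsurj : ∀ s : ℝ, |s| = t → Function.Surjective ((A.perturb V).addScalar (s * I)) := by
    intro s hs
    have hs0 : s ≠ 0 := by rintro rfl; simp only [abs_zero] at hs; linarith
    have heq : (A.perturb V).addScalar (s * I) = A.addScalar (s * I) + V :=
      LinearMap.ext fun x => show A x + V x + _ = A x + _ + V x from add_right_comm _ _ _
    rw [heq]
    refine LinearMap.surjective_add_of_norm_le_mul (hA.surjective_addScalar hs0) hγ fun x => ?_
    have hx : t * ‖(x : H)‖ ≤ ‖A.addScalar (s * I) x‖ :=
      hs ▸ hsymm.abs_mul_norm_le_norm_addScalar s x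
    calc ‖V x‖ ≤ α * ‖A x‖ + β * ‖(x : H)‖ := hbound x
      _ ≤ α * ‖A.addScalar (s * I) x‖ + β / t * ‖A.addScalar (s * I) x‖ := by
        refine add_le_add (mul_le_mul_of_nonneg_left (hsymm.norm_le_norm_addScalar s x) hα0) ?_
        rw [div_mul_eq_mul_div, le_div_iff₀ ht, mul_assoc]
        exact mul_le_mul_of_nonneg_left (by linarith) hβ
      _ = (α + β / t) * ‖A.addScalar (s * I) x‖ := by ring
  refine (hsymm.perturb hV).isSelfAdjoint_of_surjective hA.dense_domain (μ := t * I)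
    (by simp) (hsurj t (abs_of_pos ht)) ?_
  simpa using hsurj (-t) (by rw [abs_neg, abs_of_pos ht])

lemma _root_.IsSelfAdjoint.perturb_of_forall_le (hA : IsSelfAdjoint A) {V : A.domain →ₗ[ℂ] H}
    (hV : (mk A.domain V).IsSymmetricOp) {α β : ℝ} (hα0 : 0 ≤ α) (hβ : 0 ≤ β)
    (hbound : ∀ t ∈ Set.Icc (0 : ℝ) 1, ∀ x,
      ‖V x‖ ≤ α * ‖A x + (t : ℂ) • V x‖ + β * ‖(x : H)‖) :
    IsSelfAdjoint (A.perturb V) := by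
  -- walk from `A` to `A + V` in `n > α` steps, each of relative bound `α / n < 1`
  obtain ⟨n, hn⟩ := exists_nat_gt α
  have hn0 : (0 : ℝ) < n := hα0.trans_lt hn
  have hstep : ∀ k ≤ n, IsSelfAdjoint (A.perturb (((k / n : ℝ) : ℂ) • V)) := by
    intro k
    induction k with
    | zero => intro _; simpa using hA
    | succ k ih =>
      intro hk
      have hkn : (k / n : ℝ) ∈ Set.Icc (0 : ℝ) 1 :=
        ⟨by positivity, (div_le_one hn0).2 (by exact_mod_cast (Nat.le_succ k).trans hk)⟩
      have hnext := (ih (Nat.le_of_succ_le hk)).perturb (V := ((1 / n : ℝ) : ℂ) • V)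
        (hV.smul_ofReal _) (α := α / n) (β := β / n) (by positivity) ((div_lt_one hn0).2 hn)
        (by positivity) fun x => ?_
      · rw [perturb_perturb, ← add_smul, ← ofReal_add, ← add_div] at hnext
        simpa using hnext
      · show ‖((1 / n : ℝ) : ℂ) • V x‖ ≤
          α / n * ‖A x + ((k / n : ℝ) : ℂ) • V x‖ + β / n * ‖(x : H)‖
        rw [norm_smul, norm_real, Real.norm_of_nonneg (by positivity)]
        calc 1 / n * ‖V x‖ ≤ 1 / n * (α * ‖A x + ((k / n : ℝ) : ℂ) • V x‖ + β * ‖(x : H)‖) :=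
              mul_le_mul_of_nonneg_left (hbound _ hkn x) (by positivity)
          _ = _ := by ring
  simpa [hn0.ne'] using hstep n le_rfl

lemma _root_.IsSelfAdjoint.of_norm_sub_le {P : H →ₗ.[ℂ] H} (hA : IsSelfAdjoint A)
    (hP : P.IsSymmetricOp) (hdom : A.domain = P.domain) {a b : ℝ} (ha0 : 0 ≤ a) (ha1 : a < 1)
    (hb : 0 ≤ b)
    (hbound : ∀ {x u v}, (x, u) ∈ A.graph → (x, v) ∈ P.graph →
      ‖u - v‖ ≤ a * (‖u‖ + ‖v‖) + b * ‖x‖) :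
    IsSelfAdjoint P := by
  let ι := Submodule.inclusion hdom.le
  set V : A.domain →ₗ[ℂ] H := P.toFun ∘ₗ ι - A.toFun
  have hPV : P = A.perturb V := by
    refine ext hdom.symm fun x hxP hxA => ?_
    show P ⟨x, hxP⟩ = A ⟨x, hxA⟩ + (P ⟨x, _⟩ - A ⟨x, hxA⟩)
    rw [add_sub_cancel]
  have hV : (mk A.domain V).IsSymmetricOp := fun x y => by
    show ⟪P (ι x) - A x, (y : H)⟫_ℂ = ⟪(x : H), P (ι y) - A y⟫_ℂ
    rw [inner_sub_left, inner_sub_right, hA.isSymmetricOp x y]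
    exact congrArg (· - _) (hP (ι x) (ι y))
  rw [hPV]
  refine hA.perturb_of_forall_le hV (by positivity : 0 ≤ 2 * a / (1 - a))
    (by positivity : 0 ≤ b / (1 - a)) fun t ht x => ?_
  have hx : ‖V x‖ ≤ a * (‖A x‖ + ‖A x + V x‖) + b * ‖(x : H)‖ := by
    have := hbound (A.mem_graph x) (P.mem_graph (ι x))
    rwa [← norm_neg, neg_sub, show P (ι x) = A x + V x from (add_sub_cancel _ _).symm,
      add_sub_cancel_left] at this
  rw [Complex.coe_smul, div_mul_eq_mul_div b]
  exact norm_le_of_le_mul_norm_add_norm ha0 ha1 ht hx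

lemma IsSymmetricOp.isSelfAdjoint_closure_of_norm_sub_le {S T : H →ₗ.[ℂ] H}
    (hS : S.IsSymmetricOp) (hT : T.IsSymmetricOp) (hdom : S.domain = T.domain) {a b : ℝ}
    (ha0 : 0 ≤ a) (ha1 : a < 1) (hb : 0 ≤ b)
    (hbound : ∀ {x u v}, (x, u) ∈ S.graph → (x, v) ∈ T.graph →
      ‖u - v‖ ≤ a * (‖u‖ + ‖v‖) + b * ‖x‖)
    (hSc : IsSelfAdjoint S.closure) :
    IsSelfAdjoint T.closure ∧ S.closure.domain = T.closure.domain := by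
  have hSd : Dense (S.domain : Set H) :=
    dense_closure.1 (hSc.dense_domain.mono S.closure_domain_subset_closure)
  have hScl := hS.isClosable hSd
  have hTcl := hT.isClosable (hdom ▸ hSd)
  obtain ⟨hdom', hbound'⟩ := hScl.closure_norm_sub_le hTcl hdom ha0 ha1 hb hbound
  exact ⟨hSc.of_norm_sub_le (hT.closure hTcl) hdom' ha0 ha1 hb hbound', hdom'⟩

end LinearPMap

theorem stmt3_general (A C : H →ₗ.[ℂ] H)
    (hAsymm : A.IsSymmetricOp) (hCsymm : C.IsSymmetricOp)
    (D : Submodule ℂ H) (hDA : D ≤ A.domain) (hDC : D ≤ C.domain)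
    (a b : ℝ) (ha0 : 0 ≤ a) (ha1 : a < 1) (hb : 0 ≤ b)
    (hbound : ∀ (φ : H) (hφA : φ ∈ A.domain) (hφC : φ ∈ C.domain), φ ∈ D →
      ‖A ⟨φ, hφA⟩ - C ⟨φ, hφC⟩‖ ≤ a * (‖A ⟨φ, hφA⟩‖ + ‖C ⟨φ, hφC⟩‖) + b * ‖φ‖) :
    (EssentiallySelfAdjointOn A D ↔ EssentiallySelfAdjointOn C D) ∧
    (EssentiallySelfAdjointOn A D →
      ((A.domRestrict D).closure).domain = ((C.domRestrict D).closure).domain) := by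
  have hdom : (A.domRestrict D).domain = (C.domRestrict D).domain := by
    rw [LinearPMap.domRestrict_domain, LinearPMap.domRestrict_domain, inf_eq_left.2 hDA,
      inf_eq_left.2 hDC]
  have hAC : ∀ {x u v}, (x, u) ∈ (A.domRestrict D).graph → (x, v) ∈ (C.domRestrict D).graph →
      ‖u - v‖ ≤ a * (‖u‖ + ‖v‖) + b * ‖x‖ := fun hu hv => by
    obtain ⟨hxD, hxu⟩ := LinearPMap.mem_graph_domRestrict_iff.1 hu
    obtain ⟨⟨x, hxA⟩, rfl, rfl⟩ := (LinearPMap.mem_graph_iff A).1 hxu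
    obtain ⟨⟨y, hyC⟩, rfl, rfl⟩ :=
      (LinearPMap.mem_graph_iff C).1 (LinearPMap.mem_graph_domRestrict_iff.1 hv).2
    exact hbound _ hxA hyC hxD
  have hCA : ∀ {x u v}, (x, u) ∈ (C.domRestrict D).graph → (x, v) ∈ (A.domRestrict D).graph →
      ‖u - v‖ ≤ a * (‖u‖ + ‖v‖) + b * ‖x‖ := fun {_ u v} hu hv => by
    rw [norm_sub_rev, add_comm ‖u‖]
    exact hAC hv hu
  have hA := (hAsymm.mono LinearPMap.domRestrict_le).isSelfAdjoint_closure_of_norm_sub_le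
    (hCsymm.mono LinearPMap.domRestrict_le) hdom ha0 ha1 hb hAC
  have hC := (hCsymm.mono LinearPMap.domRestrict_le).isSelfAdjoint_closure_of_norm_sub_le
    (hAsymm.mono LinearPMap.domRestrict_le) hdom.symm ha0 ha1 hb hCA
  exact ⟨⟨fun h => (hA h).1, fun h => (hC h).1⟩, fun h => (hA h).2⟩

/-- Let `A` and `C` be symmetric operators on a Hilbert space and `D` a
linear subspace contained in both domains. If there are constants `0 ≤ a < 1` and `b ≥ 0`
such that `‖(A−C)φ‖ ≤ a(‖Aφ‖ + ‖Cφ‖) + b‖φ‖` for all `φ ∈ D`, then `A` is essentially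
self-adjoint on `D` iff `C` is, and in that case the closures of the restrictions of `A` and
`C` to `D` have equal domains. -/
theorem stmt3 (A C : H →ₗ.[ℂ] H)
    (hAdense : Dense (A.domain : Set H)) (hCdense : Dense (C.domain : Set H))
    (hAsymm : A.IsSymmetricOp) (hCsymm : C.IsSymmetricOp)
    (D : Submodule ℂ H) (hDA : D ≤ A.domain) (hDC : D ≤ C.domain)
    (a b : ℝ) (ha0 : 0 ≤ a) (ha1 : a < 1) (hb : 0 ≤ b)
    (hbound : ∀ (φ : H) (hφA : φ ∈ A.domain) (hφC : φ ∈ C.domain), φ ∈ D →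
      ‖A ⟨φ, hφA⟩ - C ⟨φ, hφC⟩‖ ≤ a * (‖A ⟨φ, hφA⟩‖ + ‖C ⟨φ, hφC⟩‖) + b * ‖φ‖) :
    (EssentiallySelfAdjointOn A D ↔ EssentiallySelfAdjointOn C D) ∧
    (EssentiallySelfAdjointOn A D →
      ((A.domRestrict D).closure).domain = ((C.domRestrict D).closure).domain) :=
  stmt3_general A C hAsymm hCsymm D hDA hDC a b ha0 ha1 hb hbound
end

section
/- Let τ be a coclosed eigenform of the Laplace–Beltrami operator on S^{N−1} acting on p-forms, with eigenvalue λ. Then on the warped product with metric f(t)dt² + g(t)dθ², for any smooth compactly supported h : (0,∞) → ℝ, the Laplace–Beltrami operator on p-forms satisfies Δ(h(t)τ) = ( λ g^{−1} h − f^{−1/2} g^{(−N+1+2p)/2} ∂_t ( f^{−1/2} g^{(N−1−2p)/2} ∂_t h ) ) τ. -/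
open Real Set

/-- An abstract model of the smooth differential forms on the sphere `S^{N-1}` (with its
standard metric): a `ℤ`-graded family of normed real vector spaces (the `L²` spaces of
`q`-forms, with `Form q = 0` understood for `q` outside `[0, N-1]`), together with the
exterior derivative `dS`, the codifferential `deltaS`, the Hodge star `starS` and the
squared `L²` norm `nsq`.  The index bookkeeping is made flexible by equality proofs.  The
fields `star_star` and `deltaS_eq` record the standard Hodge-theoretic identities
`*∘* = (−1)^{pq}` and `δ = (−1)^{(N−1)(p+1)+1} * d *` on the `(N−1)`-dimensional sphere. -/
structure SphereCalc (N : ℤ) where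
  Form : ℤ → Type*
  [grp : ∀ p, NormedAddCommGroup (Form p)]
  [mod : ∀ p, NormedSpace ℝ (Form p)]
  dS : ∀ p q, q = p + 1 → (Form p →ₗ[ℝ] Form q)
  deltaS : ∀ p q, q = p - 1 → (Form p →ₗ[ℝ] Form q)
  starS : ∀ p q, p + q = N - 1 → (Form p →ₗ[ℝ] Form q)
  nsq : ∀ p, Form p → ℝ
  star_star : ∀ p q (h : p + q = N - 1) (x : Form p),
    starS q p (by omega) (starS p q h x) = ((-1 : ℝ) ^ (p * q)) • x
  deltaS_eq : ∀ p q (h : q = p - 1) (x : Form p),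
    deltaS p q h x = ((-1 : ℝ) ^ ((N - 1) * (p + 1) + 1)) •
      starS (N - p) q (by omega) (dS (N - 1 - p) (N - p) (by omega)
        (starS p (N - 1 - p) (by omega) x))

attribute [instance] SphereCalc.grp SphereCalc.mod

namespace SphereCalc

variable {N : ℤ} (S : SphereCalc N)

/-!  A `p`-form `ω` on the warped product `M = (0,∞) × S^{N-1}` with metric
`f(t)dt² + g(t)dθ²` is represented by its decomposition `ω = ω₁ + ω₂ ∧ dt`, i.e. by a pair
of curves `ω₁ : ℝ → Form p` (tangential part) and `ω₂ : ℝ → Form (p−1)` (normal part).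
The operators below give the tangential/normal parts of `*ω`, `dω` and `δω`. -/

/-- Tangential part of the Hodge star (on `M`) of a `p`-form, coming from the normal part
`ω₂`.  The coefficient is derived from first principles: the sign `(−1)^{N−p}`, the volume
density `f^{1/2} g^{(N−1)/2}` of the warped metric, the scaling `g^{−(p−1)}` of the
pointwise norm of a sphere `(p−1)`-form, and the scaling `f^{−1}` of the `dt` factor. -/
noncomputable def starMtan (f g : ℝ → ℝ) (p p₂ q : ℤ) (h₂ : p₂ = p - 1) (hq : q = N - p)
    (ω₂ : ℝ → S.Form p₂) : ℝ → S.Form q := fun t =>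
  ((-1 : ℝ) ^ (N - p) * ((f t) ^ ((1 : ℝ) / 2) * (g t) ^ (((N : ℝ) - 1) / 2))
      * (f t)⁻¹ * (g t) ^ (-((p : ℝ) - 1))) •
    S.starS p₂ q (by omega) (ω₂ t)

/-- Normal part of the Hodge star (on `M`) of a `p`-form, coming from the tangential part
`ω₁`; the coefficient is the volume density `f^{1/2} g^{(N−1)/2}` times the pointwise
scaling `g^{−p}` of sphere `p`-forms. -/
noncomputable def starMnor (f g : ℝ → ℝ) (p q : ℤ) (hq : q = N - p - 1)
    (ω₁ : ℝ → S.Form p) : ℝ → S.Form q := fun t =>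
  (((f t) ^ ((1 : ℝ) / 2) * (g t) ^ (((N : ℝ) - 1) / 2)) * (g t) ^ (-(p : ℝ))) •
    S.starS p q (by omega) (ω₁ t)

/-- Tangential part of the exterior derivative on `M` of a `p`-form. -/
noncomputable def dMtan (p q : ℤ) (hq : q = p + 1) (ω₁ : ℝ → S.Form p) :
    ℝ → S.Form q := fun t => S.dS p q hq (ω₁ t)

/-- Normal part of the exterior derivative on `M` of a `p`-form. -/
noncomputable def dMnor (p p₂ q : ℤ) (h₂ : p₂ = p - 1) (hq : q = p)
    (ω₁ : ℝ → S.Form p) (ω₂ : ℝ → S.Form p₂) : ℝ → S.Form q := fun t =>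
  ((-1 : ℝ) ^ p) • (show S.Form q from hq ▸ deriv ω₁ t)
    + S.dS p₂ q (by omega) (ω₂ t)

/-- Tangential part of the codifferential on `M` of a `p`-form, defined from first
principles as `δ = (−1)^{N(p+1)+1} * d *` for the warped metric. -/
noncomputable def deltaMtan (f g : ℝ → ℝ) (p p₂ q : ℤ) (h₂ : p₂ = p - 1) (hq : q = p - 1)
    (ω₁ : ℝ → S.Form p) (ω₂ : ℝ → S.Form p₂) : ℝ → S.Form q := fun t =>
  ((-1 : ℝ) ^ (N * (p + 1) + 1)) •
    S.starMtan f g (N - p + 1) (N - p) q (by omega) (by omega)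
      (S.dMnor (N - p) (N - p - 1) (N - p) (by omega) rfl
        (S.starMtan f g p p₂ (N - p) h₂ rfl ω₂)
        (S.starMnor f g p (N - p - 1) rfl ω₁)) t

/-- Normal part of the codifferential on `M` of a `p`-form, defined from first principles
as `δ = (−1)^{N(p+1)+1} * d *` for the warped metric. -/
noncomputable def deltaMnor (f g : ℝ → ℝ) (p p₂ q : ℤ) (h₂ : p₂ = p - 1) (hq : q = p - 2)
    (ω₁ : ℝ → S.Form p) (ω₂ : ℝ → S.Form p₂) : ℝ → S.Form q := fun t =>
  ((-1 : ℝ) ^ (N * (p + 1) + 1)) •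
    S.starMnor f g (N - p + 1) q (by omega)
      (S.dMtan (N - p) (N - p + 1) rfl (S.starMtan f g p p₂ (N - p) h₂ rfl ω₂)) t

end SphereCalc

open SphereCalc

/-- Tangential part of the Hodge Laplacian `Δ = dδ + δd` on the warped product. -/
noncomputable def SphereCalc.laplMtan {N : ℤ} (S : SphereCalc N) (f g : ℝ → ℝ)
    (p p₂ : ℤ) (h₂ : p₂ = p - 1) (ω₁ : ℝ → S.Form p) (ω₂ : ℝ → S.Form p₂) :
    ℝ → S.Form p := fun t =>
  S.dMtan (p - 1) p (by omega) (S.deltaMtan f g p p₂ (p - 1) h₂ rfl ω₁ ω₂) t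
    + S.deltaMtan f g (p + 1) p p (by omega) (by omega)
        (S.dMtan p (p + 1) rfl ω₁) (S.dMnor p p₂ p h₂ rfl ω₁ ω₂) t

/-- Normal part of the Hodge Laplacian `Δ = dδ + δd` on the warped product. -/
noncomputable def SphereCalc.laplMnor {N : ℤ} (S : SphereCalc N) (f g : ℝ → ℝ)
    (p p₂ : ℤ) (h₂ : p₂ = p - 1) (ω₁ : ℝ → S.Form p) (ω₂ : ℝ → S.Form p₂) :
    ℝ → S.Form p₂ := fun t =>
  S.dMnor (p - 1) (p - 2) p₂ (by omega) (by omega)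
      (S.deltaMtan f g p p₂ (p - 1) h₂ rfl ω₁ ω₂)
      (S.deltaMnor f g p p₂ (p - 2) h₂ rfl ω₁ ω₂) t
    + S.deltaMnor f g (p + 1) p p₂ (by omega) (by omega)
        (S.dMtan p (p + 1) rfl ω₁) (S.dMnor p p₂ p h₂ rfl ω₁ ω₂) t

/-- Let `τ` be a coclosed eigenform of the Laplace–Beltrami operator on
`S^{N−1}` acting on `p`-forms, with eigenvalue `λ`.  On the warped product with metric
`f(t)dt² + g(t)dθ²`, for any smooth compactly supported `h : (0,∞) → ℝ`,
`Δ(h(t)τ) = (λ g⁻¹ h − f^{−1/2} g^{(−N+1+2p)/2} ∂_t(f^{−1/2} g^{(N−1−2p)/2} ∂_t h)) τ`. -/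
theorem stmt8 (N : ℤ) (hN : 2 ≤ N) (S : SphereCalc N) (p : ℤ) (hp0 : 0 ≤ p) (hpN : p ≤ N)
    (f g : ℝ → ℝ) (hf : ∀ t ∈ Set.Ioi (0 : ℝ), 0 < f t) (hg : ∀ t ∈ Set.Ioi (0 : ℝ), 0 < g t)
    (hfs : ContDiffOn ℝ (⊤ : ℕ∞) f (Set.Ioi 0)) (hgs : ContDiffOn ℝ (⊤ : ℕ∞) g (Set.Ioi 0))
    (lam : ℝ) (hlam : 0 ≤ lam) (τ : S.Form p)
    -- `τ` is coclosed
    (hco : S.deltaS p (p - 1) rfl τ = 0)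
    -- `τ` is an eigenform of the sphere Laplacian with eigenvalue `lam`
    (heig : S.deltaS (p + 1) p (by omega) (S.dS p (p + 1) rfl τ)
        + S.dS (p - 1) p (by omega) (S.deltaS p (p - 1) rfl τ) = lam • τ)
    (h : ℝ → ℝ) (hsm : ContDiff ℝ (⊤ : ℕ∞) h) (hsupp : HasCompactSupport h)
    (hsupp' : Function.support h ⊆ Set.Ioi 0) :
    ∀ t ∈ Set.Ioi (0 : ℝ),
      S.laplMtan f g p (p - 1) rfl (fun s => h s • τ) (fun _ => 0) t =
        (lam / g t * h t -
          (f t) ^ (-(1 : ℝ) / 2) * (g t) ^ ((-(N : ℝ) + 1 + 2 * p) / 2) *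
            deriv (fun s =>
              (f s) ^ (-(1 : ℝ) / 2) * (g s) ^ (((N : ℝ) - 1 - 2 * p) / 2) * deriv h s) t)
          • τ ∧
      S.laplMnor f g p (p - 1) rfl (fun s => h s • τ) (fun _ => 0) t = 0 := by
  have hneg : (-1 : ℝ) ≠ 0 := by norm_num
  -- star-d-star of τ vanishes (coclosedness)
  have hτ0 : ∀ a b c (h1 : p + a = N - 1) (h2 : b = a + 1) (h3 : b + c = N - 1),
      S.starS b c h3 (S.dS a b h2 (S.starS p a h1 τ)) = 0 := by
    intro a b c h1 h2 h3
    obtain rfl : a = N - 1 - p := by omega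
    obtain rfl : b = N - p := by omega
    obtain rfl : c = p - 1 := by omega
    have hd := S.deltaS_eq p (p - 1) rfl τ
    rw [hco] at hd
    exact (smul_eq_zero.mp hd.symm).resolve_left (zpow_ne_zero _ hneg)
  -- star-d-star of dτ is (sign * lam) • τ
  have hτlam : ∀ a b (h1 : p + 1 + a = N - 1) (h2 : b = a + 1) (h3 : b + p = N - 1),
      S.starS b p h3 (S.dS a b h2 (S.starS (p + 1) a h1 (S.dS p (p + 1) rfl τ))) =
        ((-1 : ℝ) ^ ((N - 1) * (p + 1 + 1) + 1) * lam) • τ := by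
    intro a b h1 h2 h3
    obtain rfl : a = N - 1 - (p + 1) := by omega
    obtain rfl : b = N - (p + 1) := by omega
    rw [hco, map_zero, add_zero] at heig
    have hd := S.deltaS_eq (p + 1) p (by omega) (S.dS p (p + 1) rfl τ)
    rw [heig] at hd
    have hss : (-1 : ℝ) ^ ((N - 1) * (p + 1 + 1) + 1) * (-1 : ℝ) ^ ((N - 1) * (p + 1 + 1) + 1) = 1 := by
      rw [← zpow_add₀ hneg]
      exact Even.neg_one_zpow ⟨_, rfl⟩
    have := congrArg (fun y => ((-1 : ℝ) ^ ((N - 1) * (p + 1 + 1) + 1)) • y) hd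
    simp only [smul_smul, hss, one_smul] at this
    exact this.symm
  -- the normal component of d(h•τ)
  have hB : S.dMnor p (p - 1) p rfl rfl (fun u => h u • τ) (fun _ => 0) =
      fun s => ((-1 : ℝ) ^ p * deriv h s) • τ := by
    funext s
    simp only [SphereCalc.dMnor, map_zero, add_zero]
    rw [deriv_smul_const (hsm.differentiable (by simp) s), smul_smul]
  have hzM : ∀ (a b c : ℤ) (h₂ : b = a - 1) (hq : c = N - a),
      S.starMtan f g a b c h₂ hq (fun _ => (0 : S.Form b)) = fun _ => 0 := by
    intro a b c h₂ hq
    funext u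
    simp [SphereCalc.starMtan]
  -- deltaMtan of (h•τ, 0) vanishes identically
  have hC : ∀ s, S.deltaMtan f g p (p - 1) (p - 1) rfl rfl (fun u => h u • τ) (fun _ => 0) s = 0 := by
    intro s
    simp only [SphereCalc.deltaMtan, SphereCalc.dMnor, SphereCalc.starMtan,
      SphereCalc.starMnor, SphereCalc.dMtan, map_zero, smul_zero, deriv_const', map_smul,
      zero_add, add_zero, smul_smul, hzM,
      hτ0 (N - p - 1) (N - p) (p - 1) (by omega) (by omega) (by omega)]
  -- deltaMnor of (·, 0) vanishes identically
  have hD : ∀ s, S.deltaMnor f g p (p - 1) (p - 2) rfl rfl (fun u => h u • τ) (fun _ => 0) s = 0 := by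
    intro s
    simp [SphereCalc.deltaMnor, SphereCalc.dMtan, hzM, SphereCalc.starMnor, map_zero, smul_zero]
  have hdM0 : ∀ (a b c : ℤ) (h₂ : b = a - 1) (hq : c = a) (t' : ℝ),
      S.dMnor a b c h₂ hq (fun _ => 0) (fun _ => 0) t' = 0 := by
    intro a b c h₂ hq t'
    subst hq
    show ((-1 : ℝ) ^ c) • (deriv (fun _ => (0 : S.Form c)) t') + S.dS b c (by omega) 0 = 0
    simp
  intro t ht
  have hFt := hf t ht
  have hGt := hg t ht
  constructor
  · have hsm' : ContDiff ℝ ((⊤ : ℕ∞) : WithTop ℕ∞) h := hsm.of_le (by simp)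
    have hdh : Differentiable ℝ (deriv h) := (contDiff_infty_iff_deriv.mp hsm').2.differentiable (by simp)
    have hfd : DifferentiableAt ℝ (fun s => f s ^ (-(1:ℝ)/2)) t :=
      (Real.differentiableAt_rpow_const_of_ne _ hFt.ne').comp t
        ((hfs.contDiffAt (isOpen_Ioi.mem_nhds ht)).differentiableAt (by simp))
    have hgd : DifferentiableAt ℝ (fun s => g s ^ (((N:ℝ) - 1 - 2*p)/2)) t :=
      (Real.differentiableAt_rpow_const_of_ne _ hGt.ne').comp t
        ((hgs.contDiffAt (isOpen_Ioi.mem_nhds ht)).differentiableAt (by simp))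
    have hinner : DifferentiableAt ℝ
        (fun s => f s ^ (-(1:ℝ)/2) * g s ^ (((N:ℝ) - 1 - 2*p)/2) * deriv h s) t :=
      (hfd.mul hgd).mul (hdh t)
    have hder : deriv (S.starMtan f g (p+1) p (N - (p+1)) (by omega) rfl
          (fun s => ((-1:ℝ)^p * deriv h s) • τ)) t
        = (((-1:ℝ)^(N - (p+1)) * (-1:ℝ)^p) *
            deriv (fun s => f s ^ (-(1:ℝ)/2) * g s ^ (((N:ℝ) - 1 - 2*p)/2) * deriv h s) t) •
          S.starS p (N - (p+1)) (by omega) τ := by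
      have hev : S.starMtan f g (p+1) p (N - (p+1)) (by omega) rfl
            (fun s => ((-1:ℝ)^p * deriv h s) • τ)
          =ᶠ[nhds t] fun s => (((-1:ℝ)^(N - (p+1)) * (-1:ℝ)^p) *
              (f s ^ (-(1:ℝ)/2) * g s ^ (((N:ℝ) - 1 - 2*p)/2) * deriv h s)) •
            S.starS p (N - (p+1)) (by omega) τ := by
        filter_upwards [isOpen_Ioi.mem_nhds ht] with s hs
        simp only [SphereCalc.starMtan, map_smul, smul_smul]
        congr 1
        have e1 : f s ^ (-(1:ℝ)/2) = f s ^ ((1:ℝ)/2) * (f s)⁻¹ := by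
          rw [← Real.rpow_neg_one (f s), ← Real.rpow_add (hf s hs)]; norm_num
        have e2 : g s ^ (((N:ℝ) - 1 - 2*p)/2)
            = g s ^ (((N:ℝ) - 1)/2) * g s ^ (-(((p + 1 : ℤ) : ℝ) - 1)) := by
          rw [← Real.rpow_add (hg s hs)]; congr 1; push_cast; ring
        rw [e1, e2]; ring
      rw [hev.deriv_eq, deriv_smul_const (hinner.const_mul _), deriv_const_mul_field]
    simp only [SphereCalc.laplMtan, SphereCalc.dMtan]
    rw [hC t, map_zero, zero_add]
    simp only [SphereCalc.deltaMtan, SphereCalc.starMtan, SphereCalc.dMnor, SphereCalc.dMtan,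
      SphereCalc.starMnor, hB, map_smul, map_add, smul_smul, smul_add,
      S.star_star p (N - (p + 1)) (by omega),
      hτlam (N - (p + 1) - 1) (N - (p + 1)) (by omega) (by omega) (by omega)]
    rw [hder]
    simp only [map_smul, smul_smul, S.star_star p (N - (p + 1)) (by omega)]
    set D : ℝ := deriv (fun s => f s ^ (-(1:ℝ)/2) * g s ^ (((N:ℝ) - 1 - 2*p)/2) * deriv h s) t with hDdef
    match_scalars
    have hsf : f t ^ ((1:ℝ)/2) * (f t)⁻¹ = f t ^ (-(1:ℝ)/2) := by
      rw [← Real.rpow_neg_one (f t), ← Real.rpow_add hFt]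
      norm_num
    have hsf2 : f t ^ ((1:ℝ)/2) * (f t)⁻¹ * f t ^ ((1:ℝ)/2) = 1 := by
      rw [← Real.rpow_neg_one (f t), ← Real.rpow_add hFt, ← Real.rpow_add hFt]
      norm_num
    have hsg : g t ^ (((N:ℝ)-1)/2) * g t ^ (-((N:ℝ) - ((p:ℝ)+1) + 1 - 1))
        = g t ^ ((-(N:ℝ)+1+2*(p:ℝ))/2) := by
      rw [← Real.rpow_add hGt]; congr 1; ring
    have hsg2 : g t ^ (((N:ℝ)-1)/2) * g t ^ (-((N:ℝ) - ((p:ℝ)+1) + 1 - 1)) * g t ^ (((N:ℝ)-1)/2)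
        * g t ^ (-((p:ℝ)+1)) = (g t)⁻¹ := by
      rw [← Real.rpow_add hGt, ← Real.rpow_add hGt, ← Real.rpow_add hGt,
        show ((N:ℝ)-1)/2 + -((N:ℝ) - ((p:ℝ)+1) + 1 - 1) + ((N:ℝ)-1)/2 + -((p:ℝ)+1) = -1 by ring,
        Real.rpow_neg_one]
    have hsgn1 : (-1:ℝ)^(N*(p+1+1)+1) * (-1:ℝ)^(N-(N-(p+1)+1)) * (-1:ℝ)^(N-(p+1))
        * (-1:ℝ)^(N-(p+1)) * (-1:ℝ)^p * (-1:ℝ)^(p*(N-(p+1))) = -1 := by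
      rw [← zpow_add₀ hneg, ← zpow_add₀ hneg, ← zpow_add₀ hneg, ← zpow_add₀ hneg, ← zpow_add₀ hneg]
      refine Odd.neg_one_zpow ?_
      obtain ⟨m, hm⟩ := Int.even_mul_succ_self p
      exact ⟨N*p + 2*N - m - 1, by linear_combination - hm⟩
    have hsgn2 : (-1:ℝ)^(N*(p+1+1)+1) * (-1:ℝ)^(N-(N-(p+1)+1)) * (-1:ℝ)^((N-1)*(p+1+1)+1) = 1 := by
      rw [← zpow_add₀ hneg, ← zpow_add₀ hneg]
      exact Even.neg_one_zpow ⟨N*p + 2*N, by ring⟩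
    have eD : ((-1:ℝ)^(N*(p+1+1)+1) * (-1:ℝ)^(N-(N-(p+1)+1)) * (-1:ℝ)^(N-(p+1))
          * (-1:ℝ)^(N-(p+1)) * (-1:ℝ)^p * (-1:ℝ)^(p*(N-(p+1)))) *
        ((f t ^ ((1:ℝ)/2) * (f t)⁻¹) *
          (g t ^ (((N:ℝ)-1)/2) * g t ^ (-((N:ℝ) - ((p:ℝ)+1) + 1 - 1)))) =
        -(f t ^ (-(1:ℝ)/2) * g t ^ ((-(N:ℝ)+1+2*(p:ℝ))/2)) := by
      rw [hsgn1, hsf, hsg]; ring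
    have eL : ((-1:ℝ)^(N*(p+1+1)+1) * (-1:ℝ)^(N-(N-(p+1)+1)) * (-1:ℝ)^((N-1)*(p+1+1)+1)) *
        ((f t ^ ((1:ℝ)/2) * (f t)⁻¹ * f t ^ ((1:ℝ)/2)) *
         (g t ^ (((N:ℝ)-1)/2) * g t ^ (-((N:ℝ) - ((p:ℝ)+1) + 1 - 1)) * g t ^ (((N:ℝ)-1)/2)
            * g t ^ (-((p:ℝ)+1)))) = (g t)⁻¹ := by
      rw [hsgn2, hsf2, hsg2]; ring
    rw [div_eq_mul_inv]
    ring_nf at eD eL ⊢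
    linear_combination
      D * eD
      + (lam * h t) * eL
  · simp only [SphereCalc.laplMnor]
    rw [show S.deltaMtan f g p (p - 1) (p - 1) rfl rfl (fun s => h s • τ) (fun _ => 0) = fun _ => 0 from funext hC,
        show S.deltaMnor f g p (p - 1) (p - 2) rfl rfl (fun s => h s • τ) (fun _ => 0) = fun _ => 0 from funext hD,
        hdM0, hB, zero_add]
    simp only [SphereCalc.deltaMnor, SphereCalc.dMtan, SphereCalc.starMtan, SphereCalc.starMnor,
      map_smul, smul_smul,
      hτ0 (N - (p + 1)) (N - (p + 1) + 1) (p - 1) (by omega) (by omega) (by omega), smul_zero]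
end
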